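/- arXiv:1912.10517 — 10 statements merged into one kernel-verified Lean document; each statement's English description precedes it below -/
import Mathlib

section
/- In Mem+, the Grundy value of position (n, k) is 0 if and only if n ≤ k. -/
/-- Grundy value of Mem⁺: options of (n,k) are (n-a, a) for k < a ≤ n. -/
noncomputable def memPlusG (n k : ℕ) : ℕ :=
  sInf {v : ℕ | v ∉ ((Finset.Ioc k n).attach.image
    (fun a => memPlusG (n - a.1) a.1))}
termination_by n
decreasing_by
  have := Finset.mem_Ioc.mp a.2
  omega

lemma memPlusG_of_le {n k : ℕ} (h : n ≤ k) : memPlusG n k = 0 := by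
  rw [memPlusG]
  apply Nat.sInf_eq_zero.mpr
  left
  simp only [Set.mem_setOf_eq, Finset.mem_image]
  rintro ⟨⟨a, ha⟩, _, _⟩
  have := Finset.mem_Ioc.mp ha
  omega

/-- In Mem⁺, G(n, k) = 0 iff n ≤ k. -/
theorem memPlus_grundy_zero_iff (n k : ℕ) (hn : 1 ≤ n) (hk : 1 ≤ k) :
    memPlusG n k = 0 ↔ n ≤ k := by
  constructor
  · intro h0
    by_contra hlt
    push_neg at hlt
    -- option a = n gives G(0, n) = 0, so 0 is in the image
    have hmem : (n : ℕ) ∈ Finset.Ioc k n := Finset.mem_Ioc.mpr ⟨hlt, le_refl n⟩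
    have h0img : (0 : ℕ) ∈ (Finset.Ioc k n).attach.image
        (fun a => memPlusG (n - a.1) a.1) := by
      apply Finset.mem_image.mpr
      refine ⟨⟨n, hmem⟩, Finset.mem_attach _ _, ?_⟩
      simp only [Nat.sub_self]
      exact memPlusG_of_le (Nat.zero_le n)
    rw [memPlusG] at h0
    rcases Nat.sInf_eq_zero.mp h0 with h | h
    · exact h.elim h0img
    · obtain ⟨v, hv⟩ := Set.Infinite.nonempty
        (Set.Finite.infinite_compl
          (((Finset.Ioc k n).attach.image
            (fun a => memPlusG (n - a.1) a.1)) : Finset ℕ).finite_toSet)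
      exact (Set.eq_empty_iff_forall_notMem.mp h) v hv
  · exact memPlusG_of_le
end

section
/- In the game Mem (pile of n stones, last move removed k stones, a move removes m stones with m ≥ k and m ≤ pile size), if k² ≥ n then the Grundy value of position (n, k) equals ⌊n/k⌋. -/
/-- Grundy value of Mem: options of (n,k) are (n-a, a) for k ≤ a ≤ n (with a ≥ 1). -/
noncomputable def memG (n k : ℕ) : ℕ :=
  sInf {v : ℕ | v ∉ ((Finset.Icc (max k 1) n).attach.image
    (fun a => memG (n - a.1) a.1))}
termination_by n
decreasing_by
  have := Finset.mem_Icc.mp a.2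
  omega

/-!
Induct on `n`. Every option `(n - a, a)` of `(n, k)` again satisfies `n - a ≤ a ^ 2`, so its
value is `(n - a) / a = n / a - 1`. Since `n / a ≤ n / k`, no option has value `n / k`; conversely
a value `w < n / k` is realised by `a = n / (w + 1)`, because `(w + 1) ^ 2 ≤ n` forces
`n / a = w + 1`.
-/

lemma memG_eq_of_mex {n k v : ℕ} (hk : 1 ≤ k)
    (hv : ∀ a, k ≤ a → a ≤ n → memG (n - a) a ≠ v)
    (hlt : ∀ w < v, ∃ a, k ≤ a ∧ a ≤ n ∧ memG (n - a) a = w) :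
    memG n k = v := by
  set S := (Finset.Icc (max k 1) n).attach.image (fun a => memG (n - a.1) a.1)
  have hmax : max k 1 = k := max_eq_left hk
  have hS : ∀ w, w ∈ S ↔ ∃ a, k ≤ a ∧ a ≤ n ∧ memG (n - a) a = w := by
    intro w
    simp only [S, hmax, Finset.mem_image, Finset.mem_attach, true_and, Subtype.exists,
      Finset.mem_Icc, exists_prop, and_assoc]
  have hvS : v ∉ S := fun hmem => by
    obtain ⟨a, hka, han, hav⟩ := (hS v).1 hmem
    exact hv a hka han hav
  rw [memG]
  refine le_antisymm (Nat.sInf_le hvS) (not_lt.1 fun hsInf => ?_)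
  exact Nat.sInf_mem (s := {w | w ∉ S}) ⟨v, hvS⟩ ((hS _).2 (hlt _ hsInf))

lemma Nat.div_div_eq_of_mul_le {n v : ℕ} (hv : 0 < v) (h : v * v ≤ n) : n / (n / v) = v := by
  have hvn : v ≤ n / v := (Nat.le_div_iff_mul_le hv).2 h
  have hpos : 0 < n / v := hv.trans_le hvn
  apply le_antisymm
  · have hlt : n < (v + 1) * (n / v) := by
      have := Nat.div_add_mod n v
      have := Nat.mod_lt n hv
      nlinarith
    exact Nat.lt_succ_iff.1 ((Nat.div_lt_iff_lt_mul hpos).2 hlt)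
  · exact (Nat.le_div_iff_mul_le hpos).2 (Nat.mul_div_le n v)

lemma le_div_succ_and_div_div_succ_eq_of_lt_div {n k w : ℕ} (hk : 1 ≤ k) (h : n ≤ k ^ 2)
    (hw : w < n / k) :
    k ≤ n / (w + 1) ∧ n / (n / (w + 1)) = w + 1 := by
  have hkw : k * (w + 1) ≤ n := by
    rw [Nat.mul_comm]; exact (Nat.le_div_iff_mul_le hk).1 hw
  have hdiv : n / k ≤ k := Nat.div_le_of_le_mul (by rwa [← sq])
  have hsq : (w + 1) * (w + 1) ≤ n :=
    (Nat.mul_le_mul_right _ (by omega)).trans hkw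
  exact ⟨(Nat.le_div_iff_mul_le w.succ_pos).2 hkw, Nat.div_div_eq_of_mul_le w.succ_pos hsq⟩

/-- In Mem, if k² ≥ n then G(n, k) = ⌊n/k⌋. -/
theorem mem_grundy_of_sq_ge (n k : ℕ) (hk : 1 ≤ k) (h : n ≤ k ^ 2) :
    memG n k = n / k := by
  induction n using Nat.strong_induction_on generalizing k with
  | _ n ih =>
  have hopt : ∀ a, k ≤ a → a ≤ n → memG (n - a) a = n / a - 1 := by
    intro a hka han
    have hsq : n - a ≤ a ^ 2 := by
      have := Nat.pow_le_pow_left hka 2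
      omega
    rw [ih _ (by omega) a (by omega) hsq]
    simpa using Nat.sub_mul_div n a 1
  apply memG_eq_of_mex hk
  · intro a hka han
    have hle : n / a ≤ n / k := Nat.div_le_div_left hka hk
    have hpos : 1 ≤ n / a := (Nat.one_le_div_iff (by omega)).2 han
    rw [hopt a hka han]
    omega
  · intro w hw
    obtain ⟨hka, hdiv⟩ := le_div_succ_and_div_div_succ_eq_of_lt_div hk h hw
    have hle : n / (w + 1) ≤ n := Nat.div_le_self _ _
    exact ⟨n / (w + 1), hka, hle, by rw [hopt _ hka hle, hdiv, Nat.add_sub_cancel]⟩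
end

section
/- Let n, k, t be natural numbers with k ≥ 1, k² ≥ n, and t < ⌊n/k⌋. Then there exists an integer a with k ≤ a ≤ n and ⌊(n−a)/a⌋ = t. -/
/-! The witness is `a = ⌊n/(t+1)⌋`. From `t < ⌊n/k⌋ ≤ k` we get `t + 1 ≤ k ≤ a`, so the remainder
of `n` modulo `t + 1` is smaller than `a`; hence `⌊n/a⌋ = t + 1` and `⌊(n - a)/a⌋ = t`. -/

theorem Nat.div_div_self_of_le_div {m n : ℕ} (h : m ≤ n / m) : n / (n / m) = m := by
  rcases m.eq_zero_or_pos with rfl | hm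
  · simp
  apply Nat.div_eq_of_lt_le (Nat.mul_div_le n m)
  calc n = m * (n / m) + n % m := (Nat.div_add_mod n m).symm
    _ < m * (n / m) + m := by gcongr; exact Nat.mod_lt n hm
    _ ≤ (m + 1) * (n / m) := by rw [add_one_mul]; gcongr

theorem mem_move_attains_general (n k t : ℕ) (hsq : n ≤ k ^ 2)
    (ht : t < n / k) :
    ∃ a : ℕ, k ≤ a ∧ a ≤ n ∧ (n - a) / a = t := by
  have htk : t + 1 ≤ k := ht.trans_le (Nat.div_le_of_le_mul (by rwa [sq] at hsq))
  have hka : k ≤ n / (t + 1) :=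
    (Nat.le_div_iff_mul_le t.succ_pos).2 (mul_comm k _ ▸ Nat.mul_le_of_le_div k _ _ ht)
  have hdiv : n / (n / (t + 1)) = t + 1 := Nat.div_div_self_of_le_div (htk.trans hka)
  refine ⟨n / (t + 1), hka, Nat.div_le_self n _, ?_⟩
  simpa [hdiv] using Nat.sub_mul_div n (n / (t + 1)) 1

/-- If k² ≥ n and t < ⌊n/k⌋, there is a with k ≤ a ≤ n and ⌊(n-a)/a⌋ = t. -/
theorem mem_move_attains (n k t : ℕ) (hk : 1 ≤ k) (hsq : n ≤ k ^ 2)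
    (ht : t < n / k) :
    ∃ a : ℕ, k ≤ a ∧ a ≤ n ∧ (n - a) / a = t :=
  mem_move_attains_general n k t hsq ht
end

section
/- In the game Mem⁰ (pile of n stones; last move removed k stones; a move removes any number a of stones with 1 ≤ a ≤ pile size and a ≠ k), a position of the form (n, n) with n ≥ 1 is a P-position (previous player wins, i.e. Grundy value 0) if and only if v₂(n) is even, where v₂(n) is the 2-adic valuation of n. Moreover every position (n, k) with 1 ≤ n and k ≠ n is an N-position. -/
/-- Grundy value of Mem⁰: options of (n,k) are (n-a, a) for 1 ≤ a ≤ n, a ≠ k. -/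
noncomputable def memZeroG (n k : ℕ) : ℕ :=
  sInf {v : ℕ | v ∉ (((Finset.Icc 1 n).erase k).attach.image
    (fun a => memZeroG (n - a.1) a.1))}
termination_by n
decreasing_by
  have h := Finset.mem_Icc.mp (Finset.mem_of_mem_erase a.2)
  omega

lemma memZeroG_eq_zero_iff (n k : ℕ) :
    memZeroG n k = 0 ↔ ∀ a, 1 ≤ a → a ≤ n → a ≠ k → memZeroG (n - a) a ≠ 0 := by
  rw [memZeroG]
  set F := (((Finset.Icc 1 n).erase k).attach.image
    (fun a => memZeroG (n - a.1) a.1)) with hF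
  have hne : {v : ℕ | v ∉ F}.Nonempty := by
    refine ⟨F.sup id + 1, fun hmem => ?_⟩
    have h := Finset.le_sup (f := id) hmem
    simp only [id_eq] at h
    omega
  rw [Nat.sInf_eq_zero]
  have h0 : (0 ∈ {v : ℕ | v ∉ F}) ↔ ∀ a, 1 ≤ a → a ≤ n → a ≠ k → memZeroG (n - a) a ≠ 0 := by
    simp only [Set.mem_setOf_eq, hF, Finset.mem_image, Finset.mem_attach, true_and,
      Subtype.exists, Finset.mem_erase, Finset.mem_Icc, not_exists]
    constructor
    · intro h a h1 h2 hak
      exact h a ⟨hak, h1, h2⟩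
    · intro h a ⟨hak, h1, h2⟩
      exact h a h1 h2 hak
  constructor
  · rintro (h | h)
    · exact h0.mp h
    · exact absurd (Set.nonempty_iff_ne_empty.mp hne) (by simp [h])
  · intro h; exact Or.inl (h0.mpr h)

lemma memZeroG_zero (k : ℕ) : memZeroG 0 k = 0 := by
  rw [memZeroG_eq_zero_iff]; intro a h1 h2; omega

lemma memZeroG_offdiag (n k : ℕ) (hn : 1 ≤ n) (_hk : 1 ≤ k) (hkn : k ≠ n) :
    memZeroG n k ≠ 0 := fun h =>
  (memZeroG_eq_zero_iff n k).mp h n hn le_rfl (Ne.symm hkn) (by simpa using memZeroG_zero n)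

lemma memZeroG_val_double (a : ℕ) (ha : 1 ≤ a) :
    padicValNat 2 (2 * a) = padicValNat 2 a + 1 := by
  rw [padicValNat.mul (by norm_num) (by omega), padicValNat.self (by norm_num)]
  omega

lemma memZeroG_diag : ∀ n, 1 ≤ n → (memZeroG n n = 0 ↔ Even (padicValNat 2 n)) := by
  intro n
  induction n using Nat.strong_induction_on with
  | _ n IH =>
    intro hn
    constructor
    · intro hG
      by_contra hodd
      have hv : 1 ≤ padicValNat 2 n := by
        rcases Nat.eq_zero_or_pos (padicValNat 2 n) with h | h
        · exact absurd (h ▸ Even.zero) hodd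
        · exact h
      have h2 : 2 ∣ n := by
        have := dvd_of_one_le_padicValNat hv
        simpa using this
      obtain ⟨a, rfl⟩ := h2
      have ha : 1 ≤ a := by omega
      have hlt : a < 2 * a := by omega
      have hval : padicValNat 2 a + 1 = padicValNat 2 (2 * a) :=
        (memZeroG_val_double a ha).symm
      have heven : Even (padicValNat 2 a) := by
        rcases Nat.even_or_odd (padicValNat 2 a) with h | h
        · exact h
        · exfalso; apply hodd
          rw [← hval]
          exact Odd.add_one h
      have hGa : memZeroG a a = 0 := (IH a hlt ha).mpr heven
      have := (memZeroG_eq_zero_iff (2*a) (2*a)).mp hG a ha (by omega) (by omega)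
      rw [show 2*a - a = a by omega] at this
      exact this hGa
    · intro heven
      rw [memZeroG_eq_zero_iff]
      intro a h1 h2 han
      have hlt : a < n := lt_of_le_of_ne h2 han
      by_cases hd : n - a = a
      · have hn2 : n = 2 * a := by omega
        have ha : 1 ≤ a := h1
        have hval : padicValNat 2 n = padicValNat 2 a + 1 := by
          rw [hn2, memZeroG_val_double a ha]
        have hodd : ¬ Even (padicValNat 2 a) := by
          intro h
          rw [hval] at heven
          exact (Nat.even_add_one.mp heven) h
        rw [hd]
        intro hGa
        exact hodd ((IH a hlt ha).mp hGa)
      · exact memZeroG_offdiag (n - a) a (by omega) h1 (fun h => hd h.symm)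

/-- P-positions of Mem⁰ are exactly the diagonal positions (n, n) with v₂(n) even;
moreover every off-diagonal position (n, k) with n ≥ 1 is an N-position. -/
theorem memZero_P_positions :
    (∀ n : ℕ, 1 ≤ n → (memZeroG n n = 0 ↔ Even (padicValNat 2 n))) ∧
    (∀ n k : ℕ, 1 ≤ n → 1 ≤ k → k ≠ n → memZeroG n k ≠ 0) := by
  exact ⟨memZeroG_diag, fun n k hn hk hkn => memZeroG_offdiag n k hn hk hkn⟩
end

section
/- In Mem⁰, for every position (n, k) with 1 ≤ k ≤ n, the Grundy value G(n, k) equals either G(n_∞) := G(n, n+1) or G(n − k, k). -/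
namespace Finset

noncomputable def mex (s : Finset ℕ) : ℕ := sInf (↑s)ᶜ

theorem mex_notMem (s : Finset ℕ) : s.mex ∉ s :=
  Nat.sInf_mem (Infinite.exists_notMem_finset s)

theorem mex_le_of_notMem {s : Finset ℕ} {m : ℕ} (hm : m ∉ s) : s.mex ≤ m :=
  Nat.sInf_le hm

theorem mex_le_mex {s t : Finset ℕ} (hst : s ⊆ t) : s.mex ≤ t.mex :=
  mex_le_of_notMem fun h => mex_notMem t (hst h)

theorem mex_eq_or_eq_of_subset_insert {s t : Finset ℕ} {x : ℕ} (hst : s ⊆ t)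
    (hts : t ⊆ insert x s) : s.mex = t.mex ∨ s.mex = x := by
  by_cases hx : s.mex = x
  · exact Or.inr hx
  · have hnt : s.mex ∉ t := fun h => (mem_insert.mp (hts h)).elim hx (mex_notMem s)
    exact Or.inl (le_antisymm (mex_le_mex hst) (mex_le_of_notMem hnt))

end Finset

noncomputable def memZeroOptionValues (n k : ℕ) : Finset ℕ :=
  ((Finset.Icc 1 n).erase k).image fun a => memZeroG (n - a) a

theorem memZeroG_eq_mex (n k : ℕ) : memZeroG n k = (memZeroOptionValues n k).mex := by
  rw [memZeroG, Finset.mex, memZeroOptionValues]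
  conv_rhs => rw [← Finset.attach_image_val (s := (Finset.Icc 1 n).erase k), Finset.image_image]
  rfl

theorem memZeroOptionValues_frontier (n : ℕ) :
    memZeroOptionValues n (n + 1) = (Finset.Icc 1 n).image fun a => memZeroG (n - a) a := by
  rw [memZeroOptionValues, Finset.erase_eq_of_notMem (by simp)]

theorem memZeroOptionValues_subset_frontier (n k : ℕ) :
    memZeroOptionValues n k ⊆ memZeroOptionValues n (n + 1) := by
  rw [memZeroOptionValues_frontier]
  exact Finset.image_subset_image (Finset.erase_subset k _)

theorem memZeroOptionValues_frontier_subset_insert (n k : ℕ) :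
    memZeroOptionValues n (n + 1) ⊆ insert (memZeroG (n - k) k) (memZeroOptionValues n k) := by
  rw [memZeroOptionValues_frontier]
  exact (Finset.image_subset_image (Finset.insert_erase_subset k _)).trans
    (Finset.image_insert _ _ _).subset

theorem memZero_two_possibilities_general (n k : ℕ) :
    memZeroG n k = memZeroG n (n + 1) ∨ memZeroG n k = memZeroG (n - k) k := by
  rw [memZeroG_eq_mex n k, memZeroG_eq_mex n (n + 1)]
  exact Finset.mex_eq_or_eq_of_subset_insert (memZeroOptionValues_subset_frontier n k)
    (memZeroOptionValues_frontier_subset_insert n k)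

/-- In Mem⁰, G(n, k) equals G(n_∞) = G(n, n+1) or G(n - k, k). -/
theorem memZero_two_possibilities (n k : ℕ) (hk : 1 ≤ k) (hkn : k ≤ n) :
    memZeroG n k = memZeroG n (n + 1) ∨ memZeroG n k = memZeroG (n - k) k :=
  memZero_two_possibilities_general n k
end

section
/- (Final Frontier Theorem) In Mem⁰, if G(n_∞) = m and a > 2n, then G(a_∞) ≠ m, where x_∞ denotes the position (x, x+1). -/
lemma memZeroG_eq (n k : ℕ) :
    memZeroG n k = sInf {v | v ∉ ((Finset.Icc 1 n).erase k).image
      fun b => memZeroG (n - b) b} := by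
  rw [memZeroG]
  congr 2
  ext v
  simp

lemma memZeroG_of_lt {n k : ℕ} (hk : n < k) : memZeroG n k = memZeroG n (n + 1) := by
  have erase_eq {j : ℕ} (hj : n < j) : (Finset.Icc 1 n).erase j = Finset.Icc 1 n :=
    Finset.erase_eq_of_notMem (by rw [Finset.mem_Icc]; omega)
  rw [memZeroG_eq, memZeroG_eq, erase_eq hk, erase_eq n.lt_succ_self]

lemma memZeroG_ne_of_move {n k b : ℕ} (hb : b ∈ Finset.Icc 1 n) (hbk : b ≠ k) :
    memZeroG n k ≠ memZeroG (n - b) b := by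
  set options := ((Finset.Icc 1 n).erase k).image fun b => memZeroG (n - b) b
  have hmex : memZeroG n k ∉ options := by
    rw [memZeroG_eq]
    exact Nat.sInf_mem (Infinite.exists_notMem_finset options)
  intro heq
  exact hmex (heq ▸ Finset.mem_image_of_mem _ (Finset.mem_erase.mpr ⟨hbk, hb⟩))

/-- Final Frontier Theorem: if G(n_∞) = m and a > 2n, then G(a_∞) ≠ m. -/
theorem memZero_final_frontier (n m a : ℕ) (h : memZeroG n (n + 1) = m)
    (ha : 2 * n < a) : memZeroG a (a + 1) ≠ m := by
  have hmove := memZeroG_ne_of_move (n := a) (k := a + 1) (b := a - n)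
    (Finset.mem_Icc.mpr (by omega)) (by omega)
  have hfree : memZeroG n (a - n) = memZeroG n (n + 1) := memZeroG_of_lt (by omega)
  rwa [show a - (a - n) = n by omega, hfree, h] at hmove
end

section
/- In Mem⁰, each natural number m occurs only finitely many times as a frontier value; consequently the sequence of frontier values n ↦ G(n_∞) is unbounded. -/
lemma sInf_notMem_finset (t : Finset ℕ) : sInf {v | v ∉ t} ∉ t :=
  Nat.sInf_mem t.finite_toSet.infinite_compl.nonempty

lemma memZeroG_ne_of_mem_Icc {n k a : ℕ} (ha : a ∈ Finset.Icc 1 n) (hak : a ≠ k) :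
    memZeroG n k ≠ memZeroG (n - a) a := by
  intro h
  have hmex := sInf_notMem_finset (((Finset.Icc 1 n).erase k).attach.image
    fun a => memZeroG (n - a.1) a.1)
  rw [← memZeroG, h] at hmex
  apply hmex
  exact Finset.mem_image.2 ⟨⟨a, Finset.mem_erase.2 ⟨hak, ha⟩⟩, Finset.mem_attach _ _, rfl⟩

lemma memZeroG_eq_of_lt {n k k' : ℕ} (hk : n < k) (hk' : n < k') :
    memZeroG n k = memZeroG n k' := by
  rw [memZeroG.eq_1 n k, memZeroG.eq_1 n k',
    Finset.erase_eq_of_notMem (by simp only [Finset.mem_Icc]; omega), Finset.erase_eq_of_notMem (by simp only [Finset.mem_Icc]; omega)]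

lemma memZeroG_frontier_ne {n N : ℕ} (h : 2 * n < N) :
    memZeroG N (N + 1) ≠ memZeroG n (n + 1) := by
  have hoption : memZeroG (N - (N - n)) (N - n) = memZeroG n (n + 1) := by
    rw [Nat.sub_sub_self (by omega)]
    exact memZeroG_eq_of_lt (by omega) (by omega)
  rw [← hoption]
  exact memZeroG_ne_of_mem_Icc (Finset.mem_Icc.2 ⟨by omega, by omega⟩) (by omega)

lemma finite_setOf_eq_of_ne_of_two_mul_lt {α : Type*} {f : ℕ → α}
    (hf : ∀ n N, 2 * n < N → f N ≠ f n) (m : α) : {n | f n = m}.Finite := by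
  rcases Set.eq_empty_or_nonempty {n | f n = m} with h | ⟨n₀, hn₀⟩
  · simp [h]
  · refine (Set.finite_Iic (2 * n₀)).subset fun N hN => ?_
    by_contra hlt
    exact hf n₀ N (not_le.1 hlt) (hN.trans hn₀.symm)

lemma exists_lt_of_finite_setOf_eq {α : Type*} [Infinite α] {f : α → ℕ}
    (hf : ∀ m, {x | f x = m}.Finite) (B : ℕ) : ∃ x, B < f x := by
  have hle : (f ⁻¹' Set.Iic B).Finite := (Set.finite_Iic B).preimage' fun m _ => hf m
  obtain ⟨x, hx⟩ := hle.infinite_compl.nonempty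
  exact ⟨x, not_le.1 hx⟩

/-- Each m occurs only finitely often as a frontier value; hence the frontier
values are unbounded. -/
theorem memZero_frontier_unbounded :
    (∀ m : ℕ, {n : ℕ | memZeroG n (n + 1) = m}.Finite) ∧
    (∀ B : ℕ, ∃ n : ℕ, B < memZeroG n (n + 1)) := by
  have hfin := finite_setOf_eq_of_ne_of_two_mul_lt fun _ _ h => memZeroG_frontier_ne h
  exact ⟨hfin, exists_lt_of_finite_setOf_eq hfin⟩
end

section
/- In Mem⁰, define f(m) to be the least n such that G(n_∞) = m (which exists since every m appears as a frontier value). Then f is strictly increasing: m < m' implies f(m) < f(m'). -/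
namespace Nat

theorem sInf_compl_finset_notMem (s : Finset ℕ) : sInf {v : ℕ | v ∉ s} ∉ s :=
  Nat.sInf_mem (s := {v : ℕ | v ∉ s}) (Infinite.exists_notMem_finset s)

theorem mem_of_lt_sInf_compl_finset {s : Finset ℕ} {v : ℕ} (h : v < sInf {v : ℕ | v ∉ s}) :
    v ∈ s :=
  not_not.mp (Nat.notMem_of_lt_sInf h)

theorem sInf_compl_finset_eq {s : Finset ℕ} {m : ℕ} (hm : m ∉ s) (hlt : ∀ v < m, v ∈ s) :
    sInf {v : ℕ | v ∉ s} = m :=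
  le_antisymm (Nat.sInf_le hm) <| not_lt.mp fun h => sInf_compl_finset_notMem s (hlt _ h)

end Nat

namespace MemZero

noncomputable def options (n k : ℕ) : Finset ℕ :=
  ((Finset.Icc 1 n).erase k).attach.image fun a => memZeroG (n - a.1) a.1

theorem memZeroG_eq_sInf_options (n k : ℕ) : memZeroG n k = sInf {v : ℕ | v ∉ options n k} := by
  rw [memZeroG]; rfl

theorem mem_options {n k v : ℕ} :
    v ∈ options n k ↔ ∃ a, 1 ≤ a ∧ a ≤ n ∧ a ≠ k ∧ memZeroG (n - a) a = v := by
  simp only [options, Finset.mem_image, Finset.mem_attach, true_and, Subtype.exists,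
    Finset.mem_erase, Finset.mem_Icc]
  constructor
  · rintro ⟨a, ⟨hak, h1, h2⟩, hv⟩
    exact ⟨a, h1, h2, hak, hv⟩
  · rintro ⟨a, h1, h2, hak, hv⟩
    exact ⟨a, ⟨hak, h1, h2⟩, hv⟩

theorem memZeroG_notMem_options (n k : ℕ) : memZeroG n k ∉ options n k := by
  rw [memZeroG_eq_sInf_options]
  exact Nat.sInf_compl_finset_notMem _

theorem mem_options_of_lt_memZeroG {n k v : ℕ} (h : v < memZeroG n k) : v ∈ options n k := by
  rw [memZeroG_eq_sInf_options] at h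
  exact Nat.mem_of_lt_sInf_compl_finset h

theorem mem_options_frontier {n v : ℕ} :
    v ∈ options n (n + 1) ↔ ∃ a, 1 ≤ a ∧ a ≤ n ∧ memZeroG (n - a) a = v := by
  rw [mem_options]
  constructor
  · rintro ⟨a, h1, h2, -, hv⟩
    exact ⟨a, h1, h2, hv⟩
  · rintro ⟨a, h1, h2, hv⟩
    exact ⟨a, h1, h2, by omega, hv⟩

theorem options_subset_options_frontier (n k : ℕ) : options n k ⊆ options n (n + 1) :=
  fun _ hv =>
    let ⟨a, h1, h2, _, hv⟩ := mem_options.mp hv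
    mem_options_frontier.mpr ⟨a, h1, h2, hv⟩

theorem memZeroG_eq_frontier_of_lt {n k : ℕ} (h : n < k) : memZeroG n k = memZeroG n (n + 1) := by
  have : options n k = options n (n + 1) := by
    refine (options_subset_options_frontier n k).antisymm fun v hv => ?_
    obtain ⟨a, h1, h2, hv⟩ := mem_options_frontier.mp hv
    exact mem_options.mpr ⟨a, h1, h2, by omega, hv⟩
  rw [memZeroG_eq_sInf_options, memZeroG_eq_sInf_options, this]

theorem exists_frontier_le_of_memZeroG_eq {n k m : ℕ} (h : memZeroG n k = m) :
    ∃ n₀ ≤ n, memZeroG n₀ (n₀ + 1) = m := by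
  induction n using Nat.strong_induction_on generalizing k with
  | _ n ih =>
    by_cases hm : m ∈ options n (n + 1)
    · obtain ⟨a, h1, h2, hv⟩ := mem_options_frontier.mp hm
      obtain ⟨n₀, hle, hn₀⟩ := ih (n - a) (by omega) hv
      exact ⟨n₀, by omega, hn₀⟩
    · refine ⟨n, le_rfl, ?_⟩
      rw [memZeroG_eq_sInf_options]
      refine Nat.sInf_compl_finset_eq hm fun v hv => ?_
      exact options_subset_options_frontier n k (mem_options_of_lt_memZeroG (h ▸ hv))

theorem exists_frontier_of_le_memZeroG {n k m : ℕ} (h : m ≤ memZeroG n k) :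
    ∃ n₀, memZeroG n₀ (n₀ + 1) = m := by
  rcases h.eq_or_lt with heq | hlt
  · exact (exists_frontier_le_of_memZeroG_eq heq.symm).imp fun _ => And.right
  · obtain ⟨a, -, -, -, hv⟩ := mem_options.mp (mem_options_of_lt_memZeroG hlt)
    exact (exists_frontier_le_of_memZeroG_eq hv).imp fun _ => And.right

theorem exists_frontier_eq (m : ℕ) : ∃ n, memZeroG n (n + 1) = m := by
  induction m using Nat.strong_induction_on with
  | _ m ih =>
    choose first hfirst using ih
    set N := 2 * ∑ j ∈ Finset.range m, (if hj : j < m then first j hj else 0) + 1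
    have hfirst_le (j : ℕ) (hj : j < m) : 2 * first j hj < N := by
      have := Finset.single_le_sum (f := fun j => if hj : j < m then first j hj else 0)
        (fun _ _ => Nat.zero_le _) (Finset.mem_range.mpr hj)
      simp only [hj, dite_true] at this
      omega
    refine exists_frontier_of_le_memZeroG (n := N) (k := N + 1) <| not_lt.mp fun hlt => ?_
    refine memZeroG_notMem_options N (N + 1) (mem_options_frontier.mpr ?_)
    have hN := hfirst_le _ hlt
    refine ⟨N - first _ hlt, by omega, by omega, ?_⟩
    rw [show N - (N - first _ hlt) = first _ hlt by omega,
      memZeroG_eq_frontier_of_lt (by omega), hfirst]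

end MemZero

open MemZero in
/-- The least n with frontier value m is strictly increasing in m. -/
theorem memZero_first_frontier_strictMono (m m' : ℕ) (h : m < m') :
    sInf {n : ℕ | memZeroG n (n + 1) = m} < sInf {n : ℕ | memZeroG n (n + 1) = m'} := by
  set n' := sInf {n : ℕ | memZeroG n (n + 1) = m'}
  have hn' : memZeroG n' (n' + 1) = m' := Nat.sInf_mem (exists_frontier_eq m')
  obtain ⟨a, ha, han, hv⟩ := mem_options_frontier.mp (mem_options_of_lt_memZeroG (hn' ▸ h))
  obtain ⟨n₀, hle, hn₀⟩ := exists_frontier_le_of_memZeroG_eq hv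
  have : sInf {n : ℕ | memZeroG n (n + 1) = m} ≤ n₀ := Nat.sInf_le hn₀
  omega
end

section
/- In Mem+, the Grundy value G(n, k) is weakly decreasing in k for fixed n: if k ≤ k' then G(n, k') ≤ G(n, k). -/
theorem Nat.sInf_compl_le_sInf_compl {s t : Set ℕ} (hst : s ⊆ t) (ht : tᶜ.Nonempty) :
    sInf sᶜ ≤ sInf tᶜ :=
  Nat.sInf_le fun h => Nat.sInf_mem ht (hst h)

noncomputable def memPlusOptionValues (n k : ℕ) : Finset ℕ :=
  (Finset.Ioc k n).attach.image (fun a => memPlusG (n - a.1) a.1)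

theorem memPlusG_eq_sInf_compl (n k : ℕ) :
    memPlusG n k = sInf (memPlusOptionValues n k : Set ℕ)ᶜ := by
  rw [memPlusG]
  rfl

theorem mem_memPlusOptionValues {n k v : ℕ} :
    v ∈ memPlusOptionValues n k ↔ ∃ a, k < a ∧ a ≤ n ∧ memPlusG (n - a) a = v := by
  simp [memPlusOptionValues, and_assoc]

theorem memPlusOptionValues_antitone (n : ℕ) : Antitone (memPlusOptionValues n) := by
  intro k k' hkk' v hv
  obtain ⟨a, hka, han, rfl⟩ := mem_memPlusOptionValues.mp hv
  exact mem_memPlusOptionValues.mpr ⟨a, by omega, han, rfl⟩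

theorem memPlus_antitone_general (n k k' : ℕ) (hkk' : k ≤ k') :
    memPlusG n k' ≤ memPlusG n k := by
  rw [memPlusG_eq_sInf_compl, memPlusG_eq_sInf_compl]
  exact Nat.sInf_compl_le_sInf_compl (by exact_mod_cast memPlusOptionValues_antitone n hkk')
    (memPlusOptionValues n k).finite_toSet.infinite_compl.nonempty

/-- In Mem⁺, the Grundy value is weakly decreasing in k for fixed n. -/
theorem memPlus_antitone (n k k' : ℕ) (hn : 1 ≤ n) (hk : 1 ≤ k) (hkk' : k ≤ k') :
    memPlusG n k' ≤ memPlusG n k :=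
  memPlus_antitone_general n k k' hkk'
end

section
/- In Mem+, for all n, k ≥ 1 with n in the m-sector Δ_m(k) (i.e. m*k + T_m ≤ n < (m+1)*k + T_{m+1}, where T_j = j(j+1)/2), and for every j with 0 ≤ j < m, there exists i with 1 ≤ i ≤ n − k such that the option (n − k − i, k + i) lies in the j-sector Δ_j(k+i), i.e. j*(k+i) + T_j ≤ n − k − i < (j+1)*(k+i) + T_{j+1}. -/
/-! Moving into the `j`-sector of `k + i` from `n` amounts to `(j + 1) i ≤ N < (j + 1) i + (j + 1) + k + i`,
where `N = n - (j + 1) k - T_j`; the choice `i = N / (j + 1)` works, and `i ≥ 1` as soon as `n` lies at or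
above the `(j + 1)`-sector, which holds for every `j < m` because the sector bases increase with the index. -/

/-- `m k + T_m`, the least element of the `m`-sector `Δ_m(k)`. -/
def sectorBase (m k : ℕ) : ℕ := m * k + m * (m + 1) / 2

def InSector (m k n : ℕ) : Prop := sectorBase m k ≤ n ∧ n < sectorBase (m + 1) k

lemma sectorBase_mono_left (k : ℕ) : Monotone (sectorBase · k) := by
  intro a b hab
  simp only [sectorBase]
  gcongr

lemma sectorBase_add_right (m k i : ℕ) : sectorBase m (k + i) = sectorBase m k + m * i := by
  simp only [sectorBase]
  ring

lemma sectorBase_succ_left (m k : ℕ) : sectorBase (m + 1) k = sectorBase m k + (k + m + 1) := by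
  have hdvd : 2 ∣ m * (m + 1) := (Nat.even_mul_succ_self m).two_dvd
  have hexp : (m + 1) * (m + 1 + 1) = m * (m + 1) + 2 * (m + 1) := by ring
  have hlin : (m + 1) * k = m * k + k := by ring
  simp only [sectorBase]
  omega

lemma exists_move_to_sector {n k j : ℕ} (h : sectorBase (j + 1) k ≤ n) :
    ∃ i, 1 ≤ i ∧ i ≤ n - k ∧ InSector j (k + i) (n - k - i) := by
  have hbase := sectorBase_succ_left j k
  obtain ⟨N, hN⟩ : ∃ N, N = n - (sectorBase j k + k) := ⟨_, rfl⟩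
  have hpos : 0 < j + 1 := j.succ_pos
  have hi1 : 1 ≤ N / (j + 1) := (Nat.one_le_div_iff hpos).mpr (by omega)
  have hlow := Nat.div_mul_le_self N (j + 1)
  have hhigh := Nat.lt_div_mul_add (a := N) hpos
  generalize N / (j + 1) = i at hi1 hlow hhigh
  have hi : i * (j + 1) = j * i + i := by ring
  refine ⟨i, hi1, by omega, ?_, ?_⟩
  · rw [sectorBase_add_right]
    omega
  · rw [sectorBase_succ_left, sectorBase_add_right]
    omega

theorem memPlus_sector_reachability_general (n k m j : ℕ)
    (h1 : m * k + m * (m + 1) / 2 ≤ n)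
    (hj : j < m) :
    ∃ i : ℕ, 1 ≤ i ∧ i ≤ n - k ∧
      j * (k + i) + j * (j + 1) / 2 ≤ n - k - i ∧
      n - k - i < (j + 1) * (k + i) + (j + 1) * (j + 2) / 2 :=
  exists_move_to_sector ((sectorBase_mono_left k hj).trans h1)

/-- Reachability: from any position (n, k) in the m-sector, every j-sector with
j < m is reachable by some legal move (removing k + i stones, 1 ≤ i ≤ n - k). -/
theorem memPlus_sector_reachability (n k m j : ℕ) (hn : 1 ≤ n) (hk : 1 ≤ k)
    (h1 : m * k + m * (m + 1) / 2 ≤ n) (h2 : n < (m + 1) * k + (m + 1) * (m + 2) / 2)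
    (hj : j < m) :
    ∃ i : ℕ, 1 ≤ i ∧ i ≤ n - k ∧
      j * (k + i) + j * (j + 1) / 2 ≤ n - k - i ∧
      n - k - i < (j + 1) * (k + i) + (j + 1) * (j + 2) / 2 :=
  memPlus_sector_reachability_general n k m j h1 hj
end
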